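/- Define the Hahn polynomial Q_n(x; \alpha,\beta,m) = \sum_{k=0}^n ((-n)_k (n+\alpha+\beta+1)_k (-x)_k) / ((\alpha+1)_k (-m)_k k!). Then for natural numbers x, n, m with n \le m-1, m(x-\beta-m) Q_n(x; \alpha,\beta,m) - m(x+\alpha+1) Q_n(x+1; \alpha,\beta,m) = (n-m)(n+\alpha+\beta+m+1) Q_n(x; \alpha,\beta,m-1). -/
import Mathlib
set_option maxHeartbeats 1000000
set_option maxRecDepth 4000


open Finset

noncomputable def poch (a : ℂ) (k : ℕ) : ℂ := (ascPochhammer ℂ k).eval a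

/-- Hahn polynomial as terminating ₃F₂ sum. -/
noncomputable def hahnQ (n x : ℕ) (α β : ℂ) (m : ℕ) : ℂ :=
  ∑ k ∈ range (n + 1),
    poch (-(n : ℂ)) k * poch ((n : ℂ) + α + β + 1) k * poch (-(x : ℂ)) k /
      (poch (α + 1) k * poch (-(m : ℂ)) k * (k.factorial : ℂ))



lemma poch_zero (a : ℂ) : poch a 0 = 1 := by simp [poch]

lemma poch_succ (a : ℂ) (k : ℕ) : poch a (k + 1) = poch a k * (a + k) := by
  simp [poch, ascPochhammer_succ_right]

lemma poch_succ' (a : ℂ) (k : ℕ) : poch a (k + 1) = a * poch (a + 1) k := by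
  simp [poch, ascPochhammer_succ_left]

lemma poch_one (a : ℂ) : poch a 1 = a := by
  rw [show (1:ℕ) = 0 + 1 from rfl, poch_succ, poch_zero]; ring

lemma poch_prod (a : ℂ) (k : ℕ) : poch a k = ∏ i ∈ range k, (a + i) := by
  induction k with
  | zero => simp [poch_zero]
  | succ k ih => rw [poch_succ, ih, prod_range_succ]

lemma poch_neg_nat_ne_zero (m k : ℕ) (h : k ≤ m) : poch (-(m:ℂ)) k ≠ 0 := by
  rw [poch_prod]
  refine prod_ne_zero_iff.mpr fun i hi hzero => ?_
  have hi' : i < m := lt_of_lt_of_le (mem_range.mp hi) h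
  have : (i:ℂ) = (m:ℂ) := by linear_combination hzero
  exact absurd (Nat.cast_injective this) (Nat.ne_of_lt hi')

lemma poch_neg_self (n : ℕ) : poch (-(n:ℂ)) (n+1) = 0 := by
  rw [poch_prod]
  exact prod_eq_zero (mem_range.mpr (Nat.lt_succ_self n)) (by simp)


/-- telescoping function: hahnG n x α β m j = G_{j+1} in math notation. -/
noncomputable def hahnG (n x : ℕ) (α β : ℂ) (m : ℕ) (j : ℕ) : ℂ :=
  (m:ℂ) * ((j:ℂ)+1) * (α + (j:ℂ) + 1) *
    (poch (-(n:ℂ)) (j+1) * poch ((n:ℂ)+α+β+1) (j+1) * poch (-(x:ℂ)) j) /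
    (poch (α+1) (j+1) * poch (-(m:ℂ)) (j+1) * ((j+1).factorial : ℂ))

lemma hahn_step (n x m j : ℕ) (α β : ℂ) (hm : 1 ≤ m) (hn : n ≤ m - 1)
    (hj : j + 1 ≤ n) (h1 : ∀ k ≤ n, poch (α + 1) k ≠ 0) :
    (m:ℂ)*((x:ℂ)-β-(m:ℂ)) * (poch (-(n:ℂ)) (j+1) * poch ((n:ℂ)+α+β+1) (j+1) * poch (-(x:ℂ)) (j+1) /
        (poch (α+1) (j+1) * poch (-(m:ℂ)) (j+1) * ((j+1).factorial:ℂ)))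
    - (m:ℂ)*((x:ℂ)+α+1) * (poch (-(n:ℂ)) (j+1) * poch ((n:ℂ)+α+β+1) (j+1) * poch (-((x+1:ℕ):ℂ)) (j+1) /
        (poch (α+1) (j+1) * poch (-(m:ℂ)) (j+1) * ((j+1).factorial:ℂ)))
    - ((n:ℂ)-(m:ℂ))*((n:ℂ)+α+β+(m:ℂ)+1) * (poch (-(n:ℂ)) (j+1) * poch ((n:ℂ)+α+β+1) (j+1) * poch (-(x:ℂ)) (j+1) /
        (poch (α+1) (j+1) * poch (-((m-1:ℕ):ℂ)) (j+1) * ((j+1).factorial:ℂ)))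
    = hahnG n x α β m j - hahnG n x α β m (j+1) := by
  have hjm : j < m := by omega
  have hj1m : j + 1 < m := by omega
  have hm0 : (m:ℂ) ≠ 0 := Nat.cast_ne_zero.mpr (by omega)
  have hmC : ((m - 1 : ℕ) : ℂ) = (m : ℂ) - 1 := by rw [Nat.cast_sub hm, Nat.cast_one]
  have hxx : ((x + 1 : ℕ) : ℂ) = (x:ℂ) + 1 := by push_cast; ring
  have hx1 : poch (-((x:ℂ)+1)) (j+1) = (-(x:ℂ)-1) * poch (-(x:ℂ)) j := by
    rw [poch_succ']
    rw [show -((x:ℂ)+1)+1 = -(x:ℂ) by ring]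
    ring
  have e1 : -(m:ℂ) + 1 = -((m:ℂ)-1) := by ring
  have h2 : -(m:ℂ) * poch (-((m:ℂ)-1)) j = poch (-(m:ℂ)) j * (-(m:ℂ)+(j:ℂ)) := by
    rw [← e1, ← poch_succ', poch_succ]
  have hrel : poch (-((m:ℂ)-1)) j = poch (-(m:ℂ)) j * ((-(m:ℂ)+(j:ℂ))/(-(m:ℂ))) := by
    rw [eq_comm, mul_div_assoc']
    rw [div_eq_iff (neg_ne_zero.mpr hm0)]
    linear_combination -h2
  have hPa : poch (α+1) j ≠ 0 := h1 j (by omega)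
  have hPa1 : poch (α+1) (j+1) ≠ 0 := h1 (j+1) hj
  have hA1 : α + 1 + (j:ℂ) ≠ 0 := by
    have := hPa1; rw [poch_succ] at this; exact right_ne_zero_of_mul this
  have hPm : poch (-(m:ℂ)) j ≠ 0 := poch_neg_nat_ne_zero m j (by omega)
  have hMj : -(m:ℂ) + (j:ℂ) ≠ 0 := by
    intro h
    have : (j:ℂ) = (m:ℂ) := by linear_combination h
    exact absurd (Nat.cast_injective this) (by omega)
  have hMj1 : -(m:ℂ) + ((j:ℂ)+1) ≠ 0 := by
    intro h
    have : ((j+1:ℕ):ℂ) = (m:ℂ) := by push_cast; linear_combination h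
    exact absurd (Nat.cast_injective this) (by omega)
  have hjf : ((j.factorial:ℕ):ℂ) ≠ 0 := Nat.cast_ne_zero.mpr (Nat.factorial_ne_zero j)
  have hj1 : ((j:ℂ)+1) ≠ 0 := by
    intro h
    have h' : ((j+1:ℕ):ℂ) = ((0:ℕ):ℂ) := by push_cast; linear_combination h
    exact absurd (Nat.cast_injective h') (by omega)
  have hj2 : ((j:ℂ)+2) ≠ 0 := by
    intro h
    have h' : ((j+2:ℕ):ℂ) = ((0:ℕ):ℂ) := by push_cast; linear_combination h
    exact absurd (Nat.cast_injective h') (by omega)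
  have hMm1 : -((m:ℂ)-1) + (j:ℂ) ≠ 0 := by
    intro h; apply hMj1; linear_combination h
  have hrelInv : (poch (-((m:ℂ)-1)) j)⁻¹ = (poch (-(m:ℂ)) j)⁻¹ * ((-(m:ℂ))/(-(m:ℂ)+(j:ℂ))) := by
    rw [hrel, mul_inv, inv_div]
  rw [hmC, hxx, hx1]
  rcases eq_or_lt_of_le hj with hcase | hcase
  · -- j + 1 = n
    subst hcase
    have hG0 : hahnG (j+1) x α β m (j+1) = 0 := by
      simp only [hahnG]
      rw [poch_neg_self (j+1)]
      simp
    rw [hG0, sub_zero]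
    simp only [hahnG, poch_succ, Nat.factorial_succ]
    push_cast
    simp only [div_eq_mul_inv, mul_inv]
    rw [hrelInv]
    have hw : (-((m:ℂ)-1)+(j:ℂ)) * (-((m:ℂ)-1)+(j:ℂ))⁻¹ = 1 := mul_inv_cancel₀ hMm1
    have Eb1 : (((m:ℂ)*((x:ℂ)-β-(m:ℂ))*(-(x:ℂ)+(j:ℂ))) - ((m:ℂ)*((x:ℂ)+α+1)*(-(x:ℂ)-1)))*(-((m:ℂ)-1)+(j:ℂ)) - ((((j:ℂ)+1)-(m:ℂ))*(((j:ℂ)+1)+α+β+(m:ℂ)+1)*(-(x:ℂ)+(j:ℂ)))*(-(m:ℂ)) = ((m:ℂ)*((j:ℂ)+1)*(α+(j:ℂ)+1))*(-((m:ℂ)-1)+(j:ℂ)) := by ring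
    have hS1 : ((m:ℂ)*((x:ℂ)-β-(m:ℂ))*(-(x:ℂ)+(j:ℂ))) - ((m:ℂ)*((x:ℂ)+α+1)*(-(x:ℂ)-1)) - ((((j:ℂ)+1)-(m:ℂ))*(((j:ℂ)+1)+α+β+(m:ℂ)+1)*(-(x:ℂ)+(j:ℂ)))*(-(m:ℂ))*(-((m:ℂ)-1)+(j:ℂ))⁻¹ = ((m:ℂ)*((j:ℂ)+1)*(α+(j:ℂ)+1)) := by
      linear_combination (-((m:ℂ)-1)+(j:ℂ))⁻¹ * Eb1 - ((((m:ℂ)*((x:ℂ)-β-(m:ℂ))*(-(x:ℂ)+(j:ℂ))) - ((m:ℂ)*((x:ℂ)+α+1)*(-(x:ℂ)-1))) - ((m:ℂ)*((j:ℂ)+1)*(α+(j:ℂ)+1)))*hw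
    linear_combination (((poch (-((j:ℂ)+1)) j * poch (((j:ℂ)+1)+α+β+1) j * poch (-(x:ℂ)) j * (poch (α+1) j)⁻¹ * (poch (-(m:ℂ)) j)⁻¹ * ((j.factorial:ℂ))⁻¹ * (α+1+(j:ℂ))⁻¹ * (-(m:ℂ)+(j:ℂ))⁻¹ * ((j:ℂ)+1)⁻¹))*((-((j:ℂ)+1)+(j:ℂ))*(((j:ℂ)+1)+α+β+1+(j:ℂ)))) * hS1
  · -- j + 1 < n
    have hPa2 : poch (α+1) (j+2) ≠ 0 := h1 (j+2) (by omega)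
    have hA2 : α + 1 + ((j:ℂ)+1) ≠ 0 := by
      have := hPa2
      rw [show j+2 = (j+1)+1 from rfl, poch_succ] at this
      have h' := right_ne_zero_of_mul this
      intro h; apply h'; push_cast; linear_combination h
    have hj2' : ((j:ℂ)+1+1) ≠ 0 := by
      intro h; exact hj2 (by linear_combination h)
    simp only [hahnG, poch_succ, Nat.factorial_succ]
    push_cast
    simp only [div_eq_mul_inv, mul_inv]
    rw [hrelInv]
    have hw : (-((m:ℂ)-1)+(j:ℂ)) * (-((m:ℂ)-1)+(j:ℂ))⁻¹ = 1 := mul_inv_cancel₀ hMm1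
    have hv : ((α+1+((j:ℂ)+1))*(-(m:ℂ)+((j:ℂ)+1))*((j:ℂ)+1+1)) * ((α+1+((j:ℂ)+1))⁻¹*(-(m:ℂ)+((j:ℂ)+1))⁻¹*((j:ℂ)+1+1)⁻¹) = 1 := by
      rw [show ((α+1+((j:ℂ)+1))*(-(m:ℂ)+((j:ℂ)+1))*((j:ℂ)+1+1)) * ((α+1+((j:ℂ)+1))⁻¹*(-(m:ℂ)+((j:ℂ)+1))⁻¹*((j:ℂ)+1+1)⁻¹) = ((α+1+((j:ℂ)+1))*(α+1+((j:ℂ)+1))⁻¹) * ((-(m:ℂ)+((j:ℂ)+1))*(-(m:ℂ)+((j:ℂ)+1))⁻¹) * (((j:ℂ)+1+1)*((j:ℂ)+1+1)⁻¹) from by ring,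
        mul_inv_cancel₀ hA2, mul_inv_cancel₀ hMj1, mul_inv_cancel₀ hj2']
      ring
    have Eb : (((m:ℂ)*((x:ℂ)-β-(m:ℂ))*(-(x:ℂ)+(j:ℂ))) - ((m:ℂ)*((x:ℂ)+α+1)*(-(x:ℂ)-1)))*(-((m:ℂ)-1)+(j:ℂ))*((α+1+((j:ℂ)+1))*(-(m:ℂ)+((j:ℂ)+1))*((j:ℂ)+1+1)) - (((n:ℂ)-(m:ℂ))*((n:ℂ)+α+β+(m:ℂ)+1)*(-(x:ℂ)+(j:ℂ)))*(-(m:ℂ))*((α+1+((j:ℂ)+1))*(-(m:ℂ)+((j:ℂ)+1))*((j:ℂ)+1+1)) = ((m:ℂ)*((j:ℂ)+1)*(α+(j:ℂ)+1))*(-((m:ℂ)-1)+(j:ℂ))*((α+1+((j:ℂ)+1))*(-(m:ℂ)+((j:ℂ)+1))*((j:ℂ)+1+1)) - ((m:ℂ)*((j:ℂ)+1+1)*(α+((j:ℂ)+1)+1)*((-(n:ℂ)+((j:ℂ)+1))*((n:ℂ)+α+β+1+((j:ℂ)+1)))*(-(x:ℂ)+(j:ℂ)))*(-((m:ℂ)-1)+(j:ℂ))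 := by ring
    have hS : ((m:ℂ)*((x:ℂ)-β-(m:ℂ))*(-(x:ℂ)+(j:ℂ))) - ((m:ℂ)*((x:ℂ)+α+1)*(-(x:ℂ)-1)) - (((n:ℂ)-(m:ℂ))*((n:ℂ)+α+β+(m:ℂ)+1)*(-(x:ℂ)+(j:ℂ)))*(-(m:ℂ))*(-((m:ℂ)-1)+(j:ℂ))⁻¹ = ((m:ℂ)*((j:ℂ)+1)*(α+(j:ℂ)+1)) - ((m:ℂ)*((j:ℂ)+1+1)*(α+((j:ℂ)+1)+1)*((-(n:ℂ)+((j:ℂ)+1))*((n:ℂ)+α+β+1+((j:ℂ)+1)))*(-(x:ℂ)+(j:ℂ)))*((α+1+((j:ℂ)+1))⁻¹*(-(m:ℂ)+((j:ℂ)+1))⁻¹*((j:ℂ)+1+1)⁻¹) := by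
      linear_combination ((-((m:ℂ)-1)+(j:ℂ))⁻¹*((α+1+((j:ℂ)+1))⁻¹*(-(m:ℂ)+((j:ℂ)+1))⁻¹*((j:ℂ)+1+1)⁻¹)) * Eb + (-((((m:ℂ)*((x:ℂ)-β-(m:ℂ))*(-(x:ℂ)+(j:ℂ))) - ((m:ℂ)*((x:ℂ)+α+1)*(-(x:ℂ)-1))) - ((m:ℂ)*((j:ℂ)+1)*(α+(j:ℂ)+1)))*((α+1+((j:ℂ)+1))*(-(m:ℂ)+((j:ℂ)+1))*((j:ℂ)+1+1))*((α+1+((j:ℂ)+1))⁻¹*(-(m:ℂ)+((j:ℂ)+1))⁻¹*((j:ℂ)+1+1)⁻¹) - ((m:ℂ)*((j:ℂ)+1+1)*(α+((j:ℂ)+1)+1)*((-(n:ℂ)+((j:ℂ)+1))*((n:ℂ)+α+β+1+((j:ℂ)+1)))*(-(x:ℂ)+(j:ℂ)))*((α+1+((j:ℂ)+1))⁻¹*(-(m:ℂ)+((j:ℂ)+1))⁻¹*((j:ℂ)+1+1)⁻¹)) * hw + (-((((m:ℂ)*((x:ℂ)-β-(m:ℂ))*(-(x:ℂ)+(j:ℂ)))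 - ((m:ℂ)*((x:ℂ)+α+1)*(-(x:ℂ)-1))) - ((m:ℂ)*((j:ℂ)+1)*(α+(j:ℂ)+1))) + (((n:ℂ)-(m:ℂ))*((n:ℂ)+α+β+(m:ℂ)+1)*(-(x:ℂ)+(j:ℂ)))*(-(m:ℂ))*(-((m:ℂ)-1)+(j:ℂ))⁻¹) * hv
    linear_combination (((poch (-(n:ℂ)) j * poch ((n:ℂ)+α+β+1) j * poch (-(x:ℂ)) j * (poch (α+1) j)⁻¹ * (poch (-(m:ℂ)) j)⁻¹ * ((j.factorial:ℂ))⁻¹ * (α+1+(j:ℂ))⁻¹ * (-(m:ℂ)+(j:ℂ))⁻¹ * ((j:ℂ)+1)⁻¹))*((-(n:ℂ)+(j:ℂ))*((n:ℂ)+α+β+1+(j:ℂ)))) * hS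

theorem hahn_difference_eq2 (n x m : ℕ) (α β : ℂ) (hm : 1 ≤ m) (hn : n ≤ m - 1)
    (h1 : ∀ k ≤ n, poch (α + 1) k ≠ 0) :
    (m : ℂ) * ((x : ℂ) - β - (m : ℂ)) * hahnQ n x α β m -
      (m : ℂ) * ((x : ℂ) + α + 1) * hahnQ n (x + 1) α β m =
    ((n : ℂ) - (m : ℂ)) * ((n : ℂ) + α + β + (m : ℂ) + 1) * hahnQ n x α β (m - 1) := by
  rcases Nat.eq_zero_or_pos n with rfl | hnpos
  · simp [hahnQ, poch_zero]
    ring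
  rw [← sub_eq_zero]
  simp only [hahnQ, Finset.mul_sum, ← Finset.sum_sub_distrib]
  rw [Finset.sum_range_succ']
  have hstep : ∀ i ∈ Finset.range n,
      ((m:ℂ) * ((x:ℂ) - β - (m:ℂ)) *
            (poch (-(n:ℂ)) (i+1) * poch ((n:ℂ) + α + β + 1) (i+1) * poch (-(x:ℂ)) (i+1) /
              (poch (α + 1) (i+1) * poch (-(m:ℂ)) (i+1) * ((i+1).factorial:ℂ))) -
          (m:ℂ) * ((x:ℂ) + α + 1) *
            (poch (-(n:ℂ)) (i+1) * poch ((n:ℂ) + α + β + 1) (i+1) * poch (-((x+1:ℕ):ℂ)) (i+1) /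
              (poch (α + 1) (i+1) * poch (-(m:ℂ)) (i+1) * ((i+1).factorial:ℂ))) -
        ((n:ℂ) - (m:ℂ)) * ((n:ℂ) + α + β + (m:ℂ) + 1) *
          (poch (-(n:ℂ)) (i+1) * poch ((n:ℂ) + α + β + 1) (i+1) * poch (-(x:ℂ)) (i+1) /
            (poch (α + 1) (i+1) * poch (-((m-1:ℕ):ℂ)) (i+1) * ((i+1).factorial:ℂ))))
      = hahnG n x α β m i - hahnG n x α β m (i+1) := by
    intro i hi
    exact hahn_step n x m i α β hm hn (by have := Finset.mem_range.mp hi; omega) h1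
  rw [Finset.sum_congr rfl hstep, Finset.sum_range_sub' (fun i => hahnG n x α β m i)]
  have hGn : hahnG n x α β m n = 0 := by
    simp only [hahnG]
    rw [poch_neg_self n]
    simp
  rw [hGn]
  have hm0 : (m:ℂ) ≠ 0 := Nat.cast_ne_zero.mpr (by omega)
  have hα : α + 1 ≠ 0 := by
    have := h1 1 hnpos
    rwa [poch_one] at this
  have hbase : hahnG n x α β m 0 =
      (m:ℂ) * (α + 1) * ((-(n:ℂ)) * ((n:ℂ)+α+β+1)) / ((α+1) * (-(m:ℂ))) := by
    simp only [hahnG]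
    norm_num [poch_one, poch_zero]
  simp only [poch_zero, Nat.factorial_zero, hbase]
  field_simp
  ring
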